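/- Let p be a real univariate polynomial of degree n with nonzero leading coefficient having exactly k distinct complex roots, and let M_p be its n×n moment matrix with entries (M_p)_{i,j} = Σ_l x_l^{i+j−2}, where x₁,…,xₙ are the roots with multiplicity. Then the leading principal k×k submatrix of M_p is positive definite if and only if all roots of p are real. -/

import Mathlib

/-!
For a real vector `v` of length `k` let `q_v = Σ v_a X^a`. The quadratic form of the `k × k`
moment matrix is `vᵀ M v = Σ_l q_v(x_l)²`. If all roots are real this is a sum of real squares,
and it vanishes only if `q_v`, of degree `< k`, vanishes at all `k` distinct roots, i.e. `v = 0`.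
If a root `y` is not real, then `ȳ ≠ y` is a root too, and there is a real polynomial of degree
`< k` vanishing at the other `k - 2` distinct roots with value `i` at `y`, hence `-i` at `ȳ`;
its coefficient vector makes the form nonpositive.
-/

open Polynomial Finset ComplexConjugate Matrix

namespace Matrix

def hankel {R : Type*} (m : ℕ → R) (k : ℕ) : Matrix (Fin k) (Fin k) R :=
  of fun i j => m (i + j)

lemma hankel_isHermitian (m : ℕ → ℝ) (k : ℕ) : (hankel m k).IsHermitian :=
  IsHermitian.ext fun i j => by simp [hankel, add_comm]

end Matrix

lemma aeval_ofFn {k : ℕ} (v : Fin k → ℝ) (z : ℂ) :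
    aeval z (ofFn k v) = ∑ a, (v a : ℂ) * z ^ (a : ℕ) := by
  simp [ofFn_eq_sum_monomial, aeval_monomial]

lemma exists_ofReal_mul_add_ofReal_eq {y : ℂ} (hy : y.im ≠ 0) (w : ℂ) :
    ∃ α β : ℝ, (α : ℂ) * y + β = w :=
  ⟨w.im / y.im, w.re - w.im / y.im * y.re, by apply Complex.ext <;> simp [field]⟩

lemma exists_map_eq_prod_X_sub_C_of_conj_mem {t : Finset ℂ} (ht : ∀ z ∈ t, conj z ∈ t) :
    ∃ r : ℝ[X], r.map (algebraMap ℝ ℂ) = ∏ z ∈ t, (X - C z) := by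
  have hfix : (∏ z ∈ t, (X - C z)).map (conj : ℂ →+* ℂ) = ∏ z ∈ t, (X - C z) := by
    rw [Polynomial.map_prod]
    refine prod_equiv (starRingAut (R := ℂ)).toEquiv (fun z => ⟨ht z, fun h => ?_⟩) (by simp)
    simpa using ht _ h
  rw [← mem_lifts, lifts_iff_coeff_lifts]
  intro j
  refine ⟨(coeff (∏ z ∈ t, (X - C z)) j).re, ?_⟩
  rw [Complex.coe_algebraMap, ← Complex.conj_eq_iff_re, ← coeff_map, hfix]

lemma exists_natDegree_lt_card_aeval_eq {s : Finset ℂ} (hs : ∀ z ∈ s, conj z ∈ s) {y : ℂ}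
    (hys : y ∈ s) (hy : y.im ≠ 0) (w : ℂ) :
    ∃ q : ℝ[X], q.natDegree < #s ∧ aeval y q = w ∧
      ∀ z ∈ s, z ≠ y → z ≠ conj y → aeval z q = 0 := by
  set t := (s.erase y).erase (conj y)
  have hmem : ∀ z, z ∈ t ↔ z ≠ conj y ∧ z ≠ y ∧ z ∈ s := fun z => by
    simp only [t, mem_erase]
  have hyt : conj y ∈ s.erase y := mem_erase.2 ⟨mt Complex.conj_eq_iff_im.1 hy, hs y hys⟩
  have hcard : #t + 2 = #s := by
    have hpos : 0 < #(s.erase y) := card_pos.2 ⟨_, hyt⟩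
    rw [card_erase_of_mem hys] at hpos
    rw [show #t = #(s.erase y) - 1 from card_erase_of_mem hyt, card_erase_of_mem hys]
    omega
  have ht : ∀ z ∈ t, conj z ∈ t := fun z hz => by
    rw [hmem] at hz ⊢
    refine ⟨fun h => hz.2.1 ?_, fun h => hz.1 ?_, hs z hz.2.2⟩ <;>
      simpa using congrArg conj h
  obtain ⟨r, hr⟩ := exists_map_eq_prod_X_sub_C_of_conj_mem ht
  have hr_eval : ∀ z, aeval z r = ∏ u ∈ t, (z - u) := fun z => by
    rw [aeval_def, eval₂_eq_eval_map, hr, eval_prod]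
    simp only [eval_sub, eval_X, eval_C]
  have hry : aeval y r ≠ 0 := by
    rw [hr_eval, prod_ne_zero_iff]
    exact fun u hu => sub_ne_zero.2 fun h => ((hmem u).1 hu).2.1 h.symm
  have hrdeg : r.natDegree = #t := by
    rw [← natDegree_map (algebraMap ℝ ℂ), hr, natDegree_finsetProd_X_sub_C_eq_card]
  obtain ⟨α, β, hαβ⟩ := exists_ofReal_mul_add_ofReal_eq hy (w / aeval y r)
  refine ⟨(C α * X + C β) * r, ?_, ?_, fun z hz hzy hzy' => ?_⟩
  · have := natDegree_mul_le (p := C α * X + C β) (q := r)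
    have := natDegree_linear_le (a := α) (b := β)
    omega
  · simp only [map_mul, map_add, aeval_C, aeval_X, Complex.coe_algebraMap, hαβ]
    field_simp
  · have hzt : z ∈ t := (hmem z).2 ⟨hzy', hzy, hz⟩
    rw [map_mul, hr_eval, prod_eq_zero hzt (sub_self z), mul_zero]

section Roots

variable {ι : Type*} [Fintype ι] {x : ι → ℂ}

lemma ofReal_dotProduct_hankel_mulVec {m : ℕ → ℝ} (hm : ∀ j, (m j : ℂ) = ∑ i, x i ^ j)
    {k : ℕ} (v : Fin k → ℝ) :
    ((v ⬝ᵥ hankel m k *ᵥ v : ℝ) : ℂ) = ∑ i, aeval (x i) (ofFn k v) ^ 2 := by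
  simp only [dotProduct, mulVec, hankel, of_apply]
  push_cast
  simp only [hm, aeval_ofFn, sq, mul_sum, sum_mul, pow_add]
  conv_lhs => enter [2, a]; rw [sum_comm]
  conv_rhs => enter [2, i]; rw [sum_comm]
  rw [sum_comm]
  exact sum_congr rfl fun i _ => sum_congr rfl fun a _ => sum_congr rfl fun b _ => by ring

lemma exists_aeval_ne_zero_of_natDegree_lt_card {q : ℝ[X]} (hq : q ≠ 0)
    (hdeg : q.natDegree < #(univ.image x)) : ∃ i, aeval (x i) q ≠ 0 := by
  by_contra! h
  refine hq (map_injective _ (algebraMap ℝ ℂ).injective ?_)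
  refine (eq_zero_of_natDegree_lt_card_of_eval_eq_zero' _ _ ?_ (by rwa [natDegree_map])).trans
    (Polynomial.map_zero _).symm
  simp only [mem_image, mem_univ, true_and, forall_exists_index, forall_apply_eq_imp_iff]
  exact fun i => by rw [eval_map_algebraMap, h i]

lemma posDef_hankel_of_forall_im_eq_zero {m : ℕ → ℝ} (hm : ∀ j, (m j : ℂ) = ∑ i, x i ^ j)
    {k : ℕ} (hk : #(univ.image x) = k) (hreal : ∀ i, (x i).im = 0) : (hankel m k).PosDef := by
  refine .of_dotProduct_mulVec_pos (hankel_isHermitian m k) fun v hv => ?_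
  set q := ofFn k v
  have hq : q ≠ 0 := (map_ne_zero_iff _ (injective_ofFn k)).2 hv
  obtain ⟨i₀, hi₀⟩ := exists_aeval_ne_zero_of_natDegree_lt_card hq
    (hk ▸ (natDegree_lt_iff_degree_lt hq).2 (ofFn_degree_lt v))
  have hx : ∀ i, aeval (x i) q = ((q.eval (x i).re : ℝ) : ℂ) := fun i => by
    conv_lhs => rw [← Complex.conj_eq_iff_re.1 (Complex.conj_eq_iff_im.2 (hreal i))]
    exact aeval_algebraMap_apply_eq_algebraMap_eval _ _
  have hform : v ⬝ᵥ hankel m k *ᵥ v = ∑ i, q.eval (x i).re ^ 2 := by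
    have := ofReal_dotProduct_hankel_mulVec hm v
    simp only [q, hx] at this
    exact_mod_cast this
  rw [star_trivial, hform]
  exact sum_pos' (fun i _ => sq_nonneg _) ⟨i₀, mem_univ _,
    pow_two_pos_of_ne_zero fun h => hi₀ (by rw [hx, h, Complex.ofReal_zero])⟩

lemma not_posDef_hankel_of_im_ne_zero {m : ℕ → ℝ} (hm : ∀ j, (m j : ℂ) = ∑ i, x i ^ j)
    {k : ℕ} (hk : #(univ.image x) = k) (hconj : ∀ z ∈ univ.image x, conj z ∈ univ.image x)
    {i₀ : ι} (him : (x i₀).im ≠ 0) : ¬ (hankel m k).PosDef := by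
  intro hpd
  obtain ⟨q, hdeg, hqy, hq0⟩ :=
    exists_natDegree_lt_card_aeval_eq hconj (mem_image_of_mem x (mem_univ i₀)) him Complex.I
  have hterm : ∀ i, (aeval (x i) q ^ 2).re ≤ 0 := fun i => by
    by_cases hy : x i = x i₀
    · simp [hy, hqy]
    by_cases hy' : x i = conj (x i₀)
    · simp [hy', aeval_conj, hqy]
    · simp [hq0 _ (mem_image_of_mem x (mem_univ i)) hy hy']
  have hofFn : ofFn k (toFn k q) = q := ofFn_comp_toFn_eq_id_of_natDegree_lt (hk ▸ hdeg)
  have hv : toFn k q ≠ 0 := fun h => Complex.I_ne_zero (by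
    rw [← hqy, ← hofFn, h, map_zero, map_zero])
  have hform := ofReal_dotProduct_hankel_mulVec hm (toFn k q)
  rw [hofFn] at hform
  have hpos := hpd.dotProduct_mulVec_pos hv
  rw [star_trivial, ← Complex.ofReal_re (_ ⬝ᵥ _), hform, Complex.re_sum] at hpos
  exact (sum_nonpos fun i _ => hterm i).not_gt hpos

lemma conj_mem_image_of_map_eq_C_mul_prod {p : ℝ[X]} {a : ℝ} (ha : a ≠ 0)
    (hroots : p.map (algebraMap ℝ ℂ) = C (a : ℂ) * ∏ i, (X - C (x i))) :
    ∀ z ∈ univ.image x, conj z ∈ univ.image x := by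
  have hmem : ∀ z, z ∈ univ.image x ↔ aeval z p = 0 := fun z => by
    simp [aeval_def, eval₂_eq_eval_map, hroots, eval_prod, prod_eq_zero_iff, sub_eq_zero, ha,
      @eq_comm _ z]
  intro z hz
  rw [hmem] at hz ⊢
  rw [aeval_conj, hz, map_zero]

end Roots

theorem stmt13_general (n k : ℕ) (p : Polynomial ℝ) (a : ℝ) (ha : a ≠ 0)
    (x : Fin n → ℂ)
    (hroots : p.map (algebraMap ℝ ℂ) =
      Polynomial.C ((a : ℂ)) * ∏ i, (Polynomial.X - Polynomial.C (x i)))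
    (hdist : ((Finset.univ : Finset (Fin n)).image x).card = k)
    (m : ℕ → ℝ) (hm : ∀ j, ((m j : ℂ)) = ∑ i, x i ^ j) :
    (Matrix.of fun i j : Fin k => m ((i : ℕ) + (j : ℕ))).PosDef ↔
      ∀ i, (x i).im = 0 := by
  refine ⟨fun hpd i => ?_, posDef_hankel_of_forall_im_eq_zero hm hdist⟩
  by_contra him
  exact not_posDef_hankel_of_im_ne_zero hm hdist
    (conj_mem_image_of_map_eq_C_mul_prod ha hroots) him hpd

/-- For a real polynomial of degree `n` with nonzero leading coefficient, complex roots
`x₁, …, xₙ` (with multiplicity) of which exactly `k` are distinct, and real moment matrix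
`(M_p)_{i,j} = Σ_l x_l^{i+j−2}`, the leading principal `k × k` submatrix of `M_p` is
positive definite iff all roots of `p` are real. -/
theorem stmt13 (n k : ℕ) (hk : k ≤ n) (p : Polynomial ℝ) (a : ℝ) (ha : a ≠ 0)
    (hdeg : p.natDegree = n) (hlead : p.leadingCoeff = a) (x : Fin n → ℂ)
    (hroots : p.map (algebraMap ℝ ℂ) =
      Polynomial.C ((a : ℂ)) * ∏ i, (Polynomial.X - Polynomial.C (x i)))
    (hdist : ((Finset.univ : Finset (Fin n)).image x).card = k)
    (m : ℕ → ℝ) (hm : ∀ j, ((m j : ℂ)) = ∑ i, x i ^ j) :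
    (Matrix.of fun i j : Fin k => m ((i : ℕ) + (j : ℕ))).PosDef ↔
      ∀ i, (x i).im = 0 :=
  stmt13_general n k p a ha x hroots hdist m hm
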